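/- arXiv:2408.09528 — 3 statements merged into one kernel-verified Lean document; each statement's English description precedes it below -/
import Mathlib

section
/- Let n ≥ 1, 0 < p ≤ 1 < p₀ < ∞ and let L be an integer with L ≥ d_p := ⌊n(1/p − 1)⌋. Let a : ℤⁿ → ℝ be a (p, p₀, L)-atom and define â(x) := ∑_{j ∈ ℤⁿ} a(j) e^{2πi (j·x)} for x ∈ ℝⁿ. Then for every x ∈ ℝⁿ with |x| ≤ √n one has |â(x)| ≤ (2π)^{L+1} |x|^{L+1} ∑_{j ∈ ℤⁿ} |a(j)| |j|^{L+1} e^{2π√n |j|}. -/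
open scoped ENNReal NNReal BigOperators
open Filter

/-- Euclidean norm of a lattice point `j ∈ ℤⁿ`. -/
noncomputable def znorm {n : ℕ} (j : Fin n → ℤ) : ℝ := Real.sqrt (∑ i, ((j i : ℝ))^2)

/-- `ℓ^s` norm (`0 < s < ∞`) of a sequence on `ℤⁿ`, valued in `ℝ≥0∞`. -/
noncomputable def ellNormF {n : ℕ} (s : ℝ) (b : (Fin n → ℤ) → ℝ) : ℝ≥0∞ :=
  (∑' j, (‖b j‖₊ : ℝ≥0∞) ^ s) ^ (1/s)

/-- `ℓ^s` norm for an extended exponent `s ∈ (0,∞]`. -/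
noncomputable def ellNorm {n : ℕ} (s : ℝ≥0∞) (b : (Fin n → ℤ) → ℝ) : ℝ≥0∞ :=
  if s = ∞ then ⨆ j, (‖b j‖₊ : ℝ≥0∞) else ellNormF s.toReal b

/-- `d_p = ⌊n(1/p − 1)⌋`. -/
noncomputable def dp (n : ℕ) (p : ℝ) : ℕ := Nat.floor ((n : ℝ) * (1/p - 1))

/-- `a : ℤⁿ → ℝ` is a `(p, p₀, L)`-atom centered at the discrete cube
`Q = {j : |j − m₀|_∞ ≤ N}` (whose cardinality is `(2N+1)ⁿ`); here `p₀ ∈ (1,∞]` and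
`1/p₀` is interpreted as `0` when `p₀ = ∞`. -/
def IsDiscreteAtom {n : ℕ} (p : ℝ) (p₀ : ℝ≥0∞) (L : ℕ) (m₀ : Fin n → ℤ) (N : ℕ)
    (a : (Fin n → ℤ) → ℝ) : Prop :=
  (∀ j : Fin n → ℤ, ¬ (∀ i, |j i - m₀ i| ≤ (N : ℤ)) → a j = 0) ∧
  ellNorm p₀ a ≤ (((2*N+1)^n : ℕ) : ℝ≥0∞) ^ (1/p₀.toReal - 1/p) ∧
  ∀ β : Fin n → ℕ, (∑ i, β i) ≤ L →
    ∑' j : Fin n → ℤ, (∏ i, ((j i : ℝ)) ^ β i) * a j = 0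

/-!
Vanishing moments up to order `L` give `∑ⱼ a(j) (j·x)ᵏ = 0` for `k ≤ L` (expand `(j·x)ᵏ`
multinomially), so `a` annihilates the degree-`L` Taylor polynomial of `exp` at `2πi j·x`.
Thus `â(x)` pairs `a` with the Taylor remainders, each at most `|2π j·x|^{L+1} e^{|2π j·x|}`,
and Cauchy–Schwarz `|j·x| ≤ |j| |x|` together with `|x| ≤ √n` finishes.
-/

open Finset Complex
open scoped Nat

noncomputable def latticeCube {n : ℕ} (m₀ : Fin n → ℤ) (N : ℕ) : Finset (Fin n → ℤ) :=
  Fintype.piFinset fun i => Icc (m₀ i - N) (m₀ i + N)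

lemma mem_latticeCube {n : ℕ} {m₀ j : Fin n → ℤ} {N : ℕ} :
    j ∈ latticeCube m₀ N ↔ ∀ i, |j i - m₀ i| ≤ N := by
  simp only [latticeCube, Fintype.mem_piFinset, mem_Icc, abs_le]
  exact forall_congr' fun i => by omega

namespace IsDiscreteAtom

variable {n : ℕ} {p : ℝ} {p₀ : ℝ≥0∞} {L : ℕ} {m₀ : Fin n → ℤ} {N : ℕ} {a : (Fin n → ℤ) → ℝ}

lemma tsum_eq_sum_latticeCube {M : Type*} [AddCommMonoid M] [TopologicalSpace M]
    (ha : IsDiscreteAtom p p₀ L m₀ N a) {f : (Fin n → ℤ) → M} (hf : ∀ j, a j = 0 → f j = 0) :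
    ∑' j, f j = ∑ j ∈ latticeCube m₀ N, f j :=
  tsum_eq_sum fun j hj => hf j (ha.1 j (mt mem_latticeCube.2 hj))

lemma sum_moment_eq_zero (ha : IsDiscreteAtom p p₀ L m₀ N a) (β : Fin n → ℕ)
    (hβ : ∑ i, β i ≤ L) : ∑ j ∈ latticeCube m₀ N, (∏ i, (j i : ℝ) ^ β i) * a j = 0 := by
  rw [← ha.tsum_eq_sum_latticeCube fun j h => by simp [h]]
  exact ha.2.2 β hβ

end IsDiscreteAtom

theorem sum_mul_sum_mul_pow_eq_zero_of_moments {κ ι R : Type*} [Fintype ι] [DecidableEq ι]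
    [CommSemiring R] {S : Finset κ} {v : κ → ι → R} {a : κ → R} {L : ℕ}
    (hmom : ∀ β : ι → ℕ, ∑ i, β i ≤ L → ∑ j ∈ S, (∏ i, v j i ^ β i) * a j = 0)
    (x : ι → R) {k : ℕ} (hk : k ≤ L) :
    ∑ j ∈ S, a j * (∑ i, v j i * x i) ^ k = 0 := by
  simp_rw [sum_pow_eq_sum_piAntidiag, mul_pow, prod_mul_distrib, mul_sum]
  rw [sum_comm]
  refine sum_eq_zero fun β hβ => ?_
  calc _ = (Nat.multinomial univ β * ∏ i, x i ^ β i) *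
        ∑ j ∈ S, (∏ i, v j i ^ β i) * a j := by
        rw [mul_sum]
        exact sum_congr rfl fun j _ => by ring
    _ = 0 := by rw [hmom β ((mem_piAntidiag.1 hβ).1 ▸ hk), mul_zero]

theorem norm_sum_mul_exp_le_of_sum_mul_pow_eq_zero {κ : Type*} {S : Finset κ} {a t : κ → ℂ}
    {L : ℕ} (hmom : ∀ k ≤ L, ∑ j ∈ S, a j * t j ^ k = 0) (c : ℂ) :
    ‖∑ j ∈ S, a j * exp (c * t j)‖ ≤
      ∑ j ∈ S, ‖a j‖ * ‖c * t j‖ ^ (L + 1) * Real.exp ‖c * t j‖ := by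
  have htaylor : ∑ j ∈ S, a j * ∑ k ∈ range (L + 1), (c * t j) ^ k / k ! = 0 := by
    simp_rw [mul_sum]
    rw [sum_comm]
    refine sum_eq_zero fun k hk => ?_
    calc _ = c ^ k / k ! * ∑ j ∈ S, a j * t j ^ k := by
          rw [mul_sum]
          exact sum_congr rfl fun j _ => by ring
      _ = 0 := by rw [hmom k (Nat.lt_succ_iff.1 (mem_range.1 hk)), mul_zero]
  calc ‖∑ j ∈ S, a j * exp (c * t j)‖
      = ‖∑ j ∈ S, a j * (exp (c * t j) - ∑ k ∈ range (L + 1), (c * t j) ^ k / k !)‖ := by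
        simp_rw [mul_sub]
        rw [sum_sub_distrib, htaylor, sub_zero]
    _ ≤ ∑ j ∈ S, ‖a j * (exp (c * t j) - ∑ k ∈ range (L + 1), (c * t j) ^ k / k !)‖ :=
        norm_sum_le _ _
    _ ≤ _ := sum_le_sum fun j _ => by
        rw [norm_mul, mul_assoc]
        exact mul_le_mul_of_nonneg_left (norm_exp_sub_sum_le_norm_mul_exp _ _) (norm_nonneg _)

lemma abs_sum_mul_le_znorm_mul_norm {n : ℕ} (j : Fin n → ℤ) (x : EuclideanSpace ℝ (Fin n)) :
    |∑ i, (j i : ℝ) * x i| ≤ znorm j * ‖x‖ := by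
  set v : EuclideanSpace ℝ (Fin n) := WithLp.toLp 2 fun i => (j i : ℝ)
  have hv : znorm j = ‖v‖ := by simp [znorm, v, EuclideanSpace.norm_eq]
  have hinner : ∑ i, (j i : ℝ) * x i = inner ℝ v x := by
    simp [v, PiLp.inner_apply, mul_comm]
  rw [hv, hinner]
  exact abs_real_inner_le_norm v x

theorem abs_fourier_atom_le_general (n : ℕ) (p p₀ : ℝ) (L : ℕ) (m₀ : Fin n → ℤ) (N : ℕ)
    (a : (Fin n → ℤ) → ℝ) (ha : IsDiscreteAtom p (ENNReal.ofReal p₀) L m₀ N a)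
    (x : EuclideanSpace ℝ (Fin n)) (hx : ‖x‖ ≤ Real.sqrt n) :
    ‖∑' j : Fin n → ℤ,
        (a j : ℂ) * Complex.exp (2 * Real.pi * Complex.I * ((∑ i, (j i : ℝ) * x i : ℝ) : ℂ))‖
      ≤ (2 * Real.pi) ^ (L + 1) * ‖x‖ ^ (L + 1) *
          ∑' j : Fin n → ℤ,
            |a j| * znorm j ^ (L + 1) * Real.exp (2 * Real.pi * Real.sqrt n * znorm j) := by
  set t : (Fin n → ℤ) → ℝ := fun j => ∑ i, (j i : ℝ) * x i
  have hmom : ∀ k ≤ L, ∑ j ∈ latticeCube m₀ N, (a j : ℂ) * (t j : ℂ) ^ k = 0 := fun k hk => by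
    exact_mod_cast sum_mul_sum_mul_pow_eq_zero_of_moments ha.sum_moment_eq_zero x hk
  rw [ha.tsum_eq_sum_latticeCube fun j h => by simp [h],
    ha.tsum_eq_sum_latticeCube fun j h => by simp [h], mul_sum]
  refine (norm_sum_mul_exp_le_of_sum_mul_pow_eq_zero hmom _).trans (sum_le_sum fun j _ => ?_)
  have hj : 0 ≤ znorm j := Real.sqrt_nonneg _
  have ht : |t j| ≤ znorm j * ‖x‖ := abs_sum_mul_le_znorm_mul_norm j x
  have ht' : 2 * Real.pi * |t j| ≤ 2 * Real.pi * Real.sqrt n * znorm j := by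
    rw [mul_assoc _ (Real.sqrt n)]
    gcongr
    exact ht.trans (by rw [mul_comm]; gcongr)
  have hc : ‖2 * (Real.pi : ℂ) * I‖ = 2 * Real.pi := by simp [abs_of_pos Real.pi_pos]
  simp only [norm_mul, hc, norm_real, Real.norm_eq_abs]
  calc |a j| * (2 * Real.pi * |t j|) ^ (L + 1) * Real.exp (2 * Real.pi * |t j|)
      ≤ |a j| * (2 * Real.pi * (znorm j * ‖x‖)) ^ (L + 1) *
          Real.exp (2 * Real.pi * Real.sqrt n * znorm j) := by gcongr
    _ = _ := by ring

/-- Estimate `|â(x)| ≤ (2π)^{L+1} |x|^{L+1} ∑_j |a(j)| |j|^{L+1} e^{2π√n|j|}`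
for `|x| ≤ √n`, where `â(x) = ∑_j a(j) e^{2πi j·x}` and `a` is a `(p,p₀,L)`-atom. -/
theorem abs_fourier_atom_le (n : ℕ) (hn : 1 ≤ n) (p p₀ : ℝ) (hp0 : 0 < p) (hp1 : p ≤ 1)
    (hp₀1 : 1 < p₀) (L : ℕ) (hL : dp n p ≤ L) (m₀ : Fin n → ℤ) (N : ℕ)
    (a : (Fin n → ℤ) → ℝ) (ha : IsDiscreteAtom p (ENNReal.ofReal p₀) L m₀ N a)
    (x : EuclideanSpace ℝ (Fin n)) (hx : ‖x‖ ≤ Real.sqrt n) :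
    ‖∑' j : Fin n → ℤ,
        (a j : ℂ) * Complex.exp (2 * Real.pi * Complex.I * ((∑ i, (j i : ℝ) * x i : ℝ) : ℂ))‖
      ≤ (2 * Real.pi) ^ (L + 1) * ‖x‖ ^ (L + 1) *
          ∑' j : Fin n → ℤ,
            |a j| * znorm j ^ (L + 1) * Real.exp (2 * Real.pi * Real.sqrt n * znorm j) :=
  abs_fourier_atom_le_general n p p₀ L m₀ N a ha x hx
end

section
/- Let n ≥ 1, 0 < p ≤ 1 < p₀ ≤ ∞, let L be an integer with L ≥ d_p := ⌊n(1/p − 1)⌋, and let r > 1/p − 1/p₀. Then there exists a constant C > 0, depending only on n, p, p₀, r, L, such that every (p, p₀, L)-atom a centered at a discrete cube Q is, for every m₀ ∈ Q, a (p, p₀, r, d_p)-molecule centered at m₀ with molecule norm N(a) ≤ C. -/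
/-! On the cube `Q` every point is within `√n (2N+1)` of `m₀`, so the weighted norm
`‖|· − m₀|^{nr} a‖_{p₀}` is at most `√n^{nr} (#Q)^r ‖a‖_{p₀}`. Combined with the size condition
`‖a‖_{p₀} ≤ (#Q)^{-(1/p − 1/p₀)}`, the powers of `#Q` in the molecule norm cancel exactly because
`θ r = 1/p − 1/p₀`, leaving `N(a) ≤ √n^{nrθ}`. The moment conditions are inherited from the atom
since `d_p ≤ L`, and all series converge because `a` is finitely supported. -/

open scoped ENNReal NNReal BigOperators
open Filter

/-- The `(p, p₀, r)` molecule norm `N(M) = ‖M‖_{p₀}^{1−θ} ‖|·−m₀|^{nr} M‖_{p₀}^{θ}` with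
`θ = (1/p − 1/p₀)/r` (and `1/p₀ = 0` when `p₀ = ∞`). -/
noncomputable def molNorm {n : ℕ} (p : ℝ) (p₀ : ℝ≥0∞) (r : ℝ) (m₀ : Fin n → ℤ)
    (M : (Fin n → ℤ) → ℝ) : ℝ≥0∞ :=
  ellNorm p₀ M ^ (1 - (1/p - 1/p₀.toReal)/r) *
    ellNorm p₀ (fun j => znorm (j - m₀) ^ ((n : ℝ)*r) * M j) ^ ((1/p - 1/p₀.toReal)/r)

/-- `M : ℤⁿ → ℝ` is a `(p, p₀, r, d)`-molecule centered at `m₀`: the molecule norm is finite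
and all moments of order `≤ d` vanish (with absolutely convergent series). -/
def IsDiscreteMolecule {n : ℕ} (p : ℝ) (p₀ : ℝ≥0∞) (r : ℝ) (d : ℕ) (m₀ : Fin n → ℤ)
    (M : (Fin n → ℤ) → ℝ) : Prop :=
  molNorm p p₀ r m₀ M ≠ ∞ ∧
  ∀ β : Fin n → ℕ, (∑ i, β i) ≤ d →
    Summable (fun j : Fin n → ℤ => |(∏ i, ((j i : ℝ)) ^ β i) * M j|) ∧
    ∑' j : Fin n → ℤ, (∏ i, ((j i : ℝ)) ^ β i) * M j = 0

/-- The discrete Riesz transform `(R_s^d b)(m) = ∑_{j ≠ m} b(j)(m_s − j_s)/|m−j|^{n+1}`. -/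
noncomputable def rieszT {n : ℕ} (s : Fin n) (b : (Fin n → ℤ) → ℝ) (m : Fin n → ℤ) : ℝ :=
  ∑' j : Fin n → ℤ, if j = m then 0 else b j * ((m s - j s : ℤ) : ℝ) / znorm (m - j) ^ (n+1)

/-- The discrete Hardy space quasi-norm: for `u ≤ 1` the Riesz-transform characterization
`‖b‖_{H^u} = ‖b‖_{ℓ^u} + ∑_s ‖R_s^d b‖_{ℓ^u}`; for `u > 1`, `H^u = ℓ^u`. -/
noncomputable def hardyNorm {n : ℕ} (u : ℝ) (b : (Fin n → ℤ) → ℝ) : ℝ≥0∞ :=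
  if u ≤ 1 then ellNormF u b + ∑ s : Fin n, ellNormF u (rieszT s b)
  else ellNormF u b

/-- The discrete Riesz potential `(I_α b)(j) = ∑_{i ≠ j} b(i)/|i−j|^{n−α}`. -/
noncomputable def rieszPot {n : ℕ} (α : ℝ) (b : (Fin n → ℤ) → ℝ) (j : Fin n → ℤ) : ℝ :=
  ∑' i : Fin n → ℤ, if i = j then 0 else b i / znorm (i - j) ^ ((n : ℝ) - α)

lemma ellNorm_le_mul_of_nnnorm_le {n : ℕ} {p₀ : ℝ≥0∞} (hp₀ : p₀ ≠ 0) {c : ℝ≥0∞}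
    {f g : (Fin n → ℤ) → ℝ} (h : ∀ j, (‖f j‖₊ : ℝ≥0∞) ≤ c * ‖g j‖₊) :
    ellNorm p₀ f ≤ c * ellNorm p₀ g := by
  unfold ellNorm
  split_ifs with htop
  · rw [ENNReal.mul_iSup]
    exact iSup_le fun j => le_iSup_of_le j (h j)
  · set s := p₀.toReal
    have hs : 0 < s := ENNReal.toReal_pos hp₀ htop
    have hpow : ∀ j, (‖f j‖₊ : ℝ≥0∞) ^ s ≤ c ^ s * (‖g j‖₊ : ℝ≥0∞) ^ s := fun j => by
      rw [← ENNReal.mul_rpow_of_nonneg _ _ hs.le]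
      exact ENNReal.rpow_le_rpow (h j) hs.le
    calc ellNormF s f
        ≤ (∑' j, c ^ s * (‖g j‖₊ : ℝ≥0∞) ^ s) ^ (1 / s) :=
          ENNReal.rpow_le_rpow (ENNReal.tsum_le_tsum hpow) (by positivity)
      _ = (c ^ s) ^ (1 / s) * ellNormF s g := by
          rw [ENNReal.tsum_mul_left, ENNReal.mul_rpow_of_nonneg _ _ (by positivity)]; rfl
      _ = c * ellNormF s g := by
          rw [← ENNReal.rpow_mul, mul_one_div, div_self hs.ne', ENNReal.rpow_one]

lemma znorm_le_sqrt_mul {n : ℕ} {x : Fin n → ℤ} {M : ℝ} (hM : 0 ≤ M)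
    (h : ∀ i, |(x i : ℝ)| ≤ M) : znorm x ≤ √n * M :=
  calc znorm x = √(∑ i, (x i : ℝ) ^ 2) := rfl
    _ ≤ √(∑ _i : Fin n, M ^ 2) :=
        Real.sqrt_le_sqrt (Finset.sum_le_sum fun i _ => sq_le_sq' (abs_le.mp (h i)).1 (abs_le.mp (h i)).2)
    _ = √n * M := by
        rw [Finset.sum_const, Finset.card_univ, Fintype.card_fin, nsmul_eq_mul,
          Real.sqrt_mul (Nat.cast_nonneg _), Real.sqrt_sq hM]

lemma sqrt_natCast_rpow_pos (n : ℕ) (r : ℝ) : 0 < √n ^ ((n : ℝ) * r) := by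
  rcases n.eq_zero_or_pos with rfl | hn
  · simp
  · exact Real.rpow_pos_of_pos (Real.sqrt_pos.mpr (Nat.cast_pos.mpr hn)) _

lemma znorm_sub_rpow_le {n : ℕ} {c j m : Fin n → ℤ} {N : ℕ} {r : ℝ} (hr : 0 ≤ r)
    (hj : ∀ i, |j i - c i| ≤ (N : ℤ)) (hm : ∀ i, |m i - c i| ≤ (N : ℤ)) :
    znorm (j - m) ^ ((n : ℝ) * r) ≤ √n ^ ((n : ℝ) * r) * (((2 * N + 1) ^ n : ℕ) : ℝ) ^ r := by
  have hdist : ∀ i, |((j - m) i : ℝ)| ≤ 2 * N + 1 := fun i => by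
    have := abs_sub_le (j i) (c i) (m i)
    rw [abs_sub_comm (c i)] at this
    exact_mod_cast (by linarith [hj i, hm i] : |j i - m i| ≤ 2 * N + 1)
  calc znorm (j - m) ^ ((n : ℝ) * r)
      ≤ (√n * (2 * N + 1)) ^ ((n : ℝ) * r) :=
        Real.rpow_le_rpow (Real.sqrt_nonneg _) (znorm_le_sqrt_mul (by positivity) hdist)
          (by positivity)
    _ = √n ^ ((n : ℝ) * r) * (((2 * N + 1) ^ n : ℕ) : ℝ) ^ r := by
        rw [Real.mul_rpow (Real.sqrt_nonneg _) (by positivity),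
          Real.rpow_natCast_mul (x := 2 * (N : ℝ) + 1) (by positivity)]
        push_cast; rfl

lemma ellNorm_weight_mul_le {n : ℕ} {p₀ : ℝ≥0∞} (hp₀ : p₀ ≠ 0) {c m : Fin n → ℤ} {N : ℕ}
    {r : ℝ} (hr : 0 ≤ r) {a : (Fin n → ℤ) → ℝ}
    (ha : ∀ j, ¬ (∀ i, |j i - c i| ≤ (N : ℤ)) → a j = 0) (hm : ∀ i, |m i - c i| ≤ (N : ℤ)) :
    ellNorm p₀ (fun j => znorm (j - m) ^ ((n : ℝ) * r) * a j) ≤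
      ENNReal.ofReal (√n ^ ((n : ℝ) * r)) * (((2 * N + 1) ^ n : ℕ) : ℝ≥0∞) ^ r * ellNorm p₀ a := by
  refine ellNorm_le_mul_of_nnnorm_le hp₀ fun j => ?_
  by_cases hj : ∀ i, |j i - c i| ≤ (N : ℤ)
  · rw [nnnorm_mul, ENNReal.coe_mul]
    gcongr
    rw [← ENNReal.ofReal_natCast, ENNReal.ofReal_rpow_of_nonneg (by positivity) hr,
      ← ENNReal.ofReal_mul (by positivity)]
    exact (Real.enorm_eq_ofReal (Real.rpow_nonneg (Real.sqrt_nonneg _) _)).trans_le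
      (ENNReal.ofReal_le_ofReal (znorm_sub_rpow_le hr hj hm))
  · simp [ha j hj]

lemma rpow_one_sub_mul_rpow_le {A B c K : ℝ≥0∞} {e r : ℝ} (hK0 : K ≠ 0) (hKtop : K ≠ ∞)
    (hr : 0 < r) (he : 0 ≤ e) (her : e ≤ r) (hA : A ≤ K ^ (-e)) (hB : B ≤ c * K ^ (r - e)) :
    A ^ (1 - e / r) * B ^ (e / r) ≤ c ^ (e / r) := by
  have hθ0 : 0 ≤ e / r := div_nonneg he hr.le
  have hexp : -e * (1 - e / r) + (r - e) * (e / r) = 0 := by field_simp; ring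
  calc A ^ (1 - e / r) * B ^ (e / r)
      ≤ (K ^ (-e)) ^ (1 - e / r) * (c * K ^ (r - e)) ^ (e / r) := by
        gcongr
        exact sub_nonneg.mpr ((div_le_one hr).mpr her)
    _ = c ^ (e / r) * K ^ (-e * (1 - e / r) + (r - e) * (e / r)) := by
        rw [ENNReal.mul_rpow_of_nonneg _ _ hθ0, ← ENNReal.rpow_mul, ← ENNReal.rpow_mul,
          ENNReal.rpow_add _ _ hK0 hKtop]
        ring
    _ = c ^ (e / r) := by rw [hexp, ENNReal.rpow_zero, mul_one]

lemma one_div_toReal_lt_one_div {p : ℝ} {p₀ : ℝ≥0∞} (hp0 : 0 < p) (hp1 : p ≤ 1) (hp₀ : 1 < p₀) :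
    1 / p₀.toReal < 1 / p := by
  have hp₀' : 1 / p₀.toReal < 1 := by
    rcases eq_or_ne p₀ ∞ with rfl | htop
    · simp
    · have : 1 < p₀.toReal := by
        simpa using (ENNReal.toReal_lt_toReal ENNReal.one_ne_top htop).mpr hp₀
      exact (div_lt_one (by linarith)).mpr this
  linarith [(one_le_div hp0).mpr hp1]

lemma finite_support_of_vanishing_off_cube {n : ℕ} {c : Fin n → ℤ} {N : ℕ}
    {a : (Fin n → ℤ) → ℝ} (ha : ∀ j, ¬ (∀ i, |j i - c i| ≤ (N : ℤ)) → a j = 0) :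
    (Function.support a).Finite := by
  refine (Fintype.piFinset fun i => Finset.Icc (c i - N) (c i + N)).finite_toSet.subset
    fun j hj => ?_
  have hcube : ∀ i, |j i - c i| ≤ (N : ℤ) := by_contra fun h => hj (ha j h)
  simp only [Fintype.coe_piFinset, Set.mem_univ_pi, Finset.coe_Icc, Set.mem_Icc]
  exact fun i => ⟨by linarith [(abs_le.mp (hcube i)).1], by linarith [(abs_le.mp (hcube i)).2]⟩

theorem atom_is_molecule_general (n : ℕ) (p : ℝ) (p₀ : ℝ≥0∞) (hp0 : 0 < p) (hp1 : p ≤ 1)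
    (hp₀ : 1 < p₀) (L : ℕ) (hL : dp n p ≤ L) (r : ℝ) (hr : 1/p - 1/p₀.toReal < r) :
    ∃ C : ℝ≥0, 0 < C ∧
      ∀ (m₀' : Fin n → ℤ) (N : ℕ) (a : (Fin n → ℤ) → ℝ),
        IsDiscreteAtom p p₀ L m₀' N a →
        ∀ m₀ : Fin n → ℤ, (∀ i, |m₀ i - m₀' i| ≤ (N : ℤ)) →
          IsDiscreteMolecule p p₀ r (dp n p) m₀ a ∧ molNorm p p₀ r m₀ a ≤ (C : ℝ≥0∞) := by
  have hp₀0 : p₀ ≠ 0 := (zero_lt_one.trans hp₀).ne'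
  set e := 1 / p - 1 / p₀.toReal
  have he : 0 < e := sub_pos.mpr (one_div_toReal_lt_one_div hp0 hp1 hp₀)
  have hr0 : 0 < r := he.trans hr
  set c₀ := √n ^ ((n : ℝ) * r)
  refine ⟨c₀.toNNReal ^ (e / r),
    NNReal.rpow_pos (Real.toNNReal_pos.mpr (sqrt_natCast_rpow_pos n r)), ?_⟩
  rintro m₀' N a ⟨hsupp, hnorm, hmom⟩ m₀ hm₀
  set K : ℝ≥0∞ := (((2 * N + 1) ^ n : ℕ) : ℝ≥0∞)
  have hK0 : K ≠ 0 := by simp [K]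
  have hmol : molNorm p p₀ r m₀ a ≤ (c₀.toNNReal ^ (e / r) : ℝ≥0) := by
    rw [ENNReal.coe_rpow_of_nonneg _ (div_nonneg he.le hr0.le)]
    refine rpow_one_sub_mul_rpow_le hK0 (ENNReal.natCast_ne_top _) hr0 he.le hr.le
      (by rwa [neg_sub]) ?_
    calc _ ≤ ENNReal.ofReal c₀ * K ^ r * K ^ (-e) :=
          (ellNorm_weight_mul_le hp₀0 hr0.le hsupp hm₀).trans (by rw [neg_sub]; gcongr)
      _ = ENNReal.ofReal c₀ * K ^ (r - e) := by
          rw [mul_assoc, ← ENNReal.rpow_add _ _ hK0 (ENNReal.natCast_ne_top _), sub_eq_add_neg]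
  refine ⟨⟨ne_top_of_le_ne_top ENNReal.coe_ne_top hmol, fun β hβ => ⟨?_, hmom β (hβ.trans hL)⟩⟩,
    hmol⟩
  exact summable_of_hasFiniteSupport ((finite_support_of_vanishing_off_cube hsupp).subset
    fun j hj => right_ne_zero_of_mul (abs_ne_zero.mp hj))

/-- Every `(p, p₀, L)`-atom centered at a discrete cube `Q` is a
`(p, p₀, r, d_p)`-molecule centered at each `m₀ ∈ Q`, with molecule norm bounded by a
constant depending only on `n, p, p₀, r, L`. -/
theorem atom_is_molecule (n : ℕ) (hn : 1 ≤ n) (p : ℝ) (p₀ : ℝ≥0∞) (hp0 : 0 < p) (hp1 : p ≤ 1)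
    (hp₀ : 1 < p₀) (L : ℕ) (hL : dp n p ≤ L) (r : ℝ) (hr : 1/p - 1/p₀.toReal < r) :
    ∃ C : ℝ≥0, 0 < C ∧
      ∀ (m₀' : Fin n → ℤ) (N : ℕ) (a : (Fin n → ℤ) → ℝ),
        IsDiscreteAtom p p₀ L m₀' N a →
        ∀ m₀ : Fin n → ℤ, (∀ i, |m₀ i - m₀' i| ≤ (N : ℤ)) →
          IsDiscreteMolecule p p₀ r (dp n p) m₀ a ∧ molNorm p p₀ r m₀ a ≤ (C : ℝ≥0∞) :=
  atom_is_molecule_general n p p₀ hp0 hp1 hp₀ L hL r hr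
end

section
/- Let n ≥ 1, 0 < p ≤ 1 < p₀ ≤ ∞ and r > 1/p − 1/p₀. Then there exists a constant C > 0, depending only on n, p, p₀ and r, such that for every M : ℤⁿ → ℝ with ‖ |·|^{nr} M ‖_{ℓ^{p₀}} < ∞ and ∑_{j ∈ ℤⁿ} M(j) = 0 (the series converging absolutely), one has ‖M‖_{ℓ^p(ℤⁿ)} ≤ C · ‖ |·|^{nr} M ‖_{ℓ^{p₀}(ℤⁿ)}. -/
/-!
Since `∑ M = 0`, the value `M 0` is minus the sum of the other values. Away from the origin
`M = |·|^{-nr} W` with `W = |·|^{nr} M`, and `|·|^{-nr}` lies in `ℓ^q(ℤⁿ \ {0})` as soon as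
`nrq > n`, by convergence of lattice `p`-series. Hölder's inequality with `1/p = 1/q + 1/p₀`
bounds the `ℓ^p` norm of `M` off the origin by `‖W‖_{p₀}`, and Hölder with `1 = 1/q₁ + 1/p₀`
bounds `|M 0| ≤ ∑_{j ≠ 0} |M j|` the same way; `r > 1/p - 1/p₀ ≥ 1 - 1/p₀` makes both
weights summable. The quasi-triangle inequality of `ℓ^p` combines the two bounds.
-/

open scoped ENNReal NNReal BigOperators
open Filter

open MeasureTheory Measure

lemma ENNReal.holderTriple_inv_tsub_inv {p r : ℝ≥0∞} (h : r ≤ p) :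
    ENNReal.HolderTriple (r⁻¹ - p⁻¹)⁻¹ p r :=
  ⟨by rw [inv_inv, tsub_add_cancel_of_le (ENNReal.inv_le_inv.2 h)]⟩

lemma ENNReal.exists_pos_nnreal_ge {x : ℝ≥0∞} (hx : x ≠ ∞) : ∃ K : ℝ≥0, 0 < K ∧ x ≤ K := by
  obtain ⟨K, hxK, -⟩ := ENNReal.lt_iff_exists_nnreal_btwn.1 hx.lt_top
  exact ⟨K, ENNReal.coe_pos.1 (zero_le.trans_lt hxK), hxK.le⟩

lemma ENNReal.toReal_inv_lt_one {p : ℝ≥0∞} (hp : 1 < p) : p.toReal⁻¹ < 1 := by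
  simpa using ENNReal.toReal_strict_mono ENNReal.one_ne_top (ENNReal.inv_lt_one.2 hp)

lemma ENNReal.HolderTriple.toReal_inv_eq_sub (p q r : ℝ≥0∞) [ENNReal.HolderTriple p q r]
    (hr : r ≠ 0) : p.toReal⁻¹ = r.toReal⁻¹ - q.toReal⁻¹ := by
  have h := ENNReal.HolderTriple.inv_eq p q r
  have hfin : p⁻¹ + q⁻¹ ≠ ∞ := h ▸ ENNReal.inv_ne_top.2 hr
  rw [← ENNReal.toReal_inv, ← ENNReal.toReal_inv, ← ENNReal.toReal_inv, h,
    ENNReal.toReal_add (ENNReal.add_ne_top.1 hfin).1 (ENNReal.add_ne_top.1 hfin).2]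
  ring

section CountingMeasure

variable {α E : Type*} [MeasurableSpace α] [MeasurableSingletonClass α] [DecidableEq α]
  [NormedAddCommGroup E]

lemma enorm_le_eLpNorm_one_update_of_tsum_eq_zero {M : α → E} (hM : Summable M)
    (h0 : ∑' j, M j = 0) (a : α) : ‖M a‖ₑ ≤ eLpNorm (Function.update M a 0) 1 count := by
  have hsplit := hM.tsum_eq_add_tsum_ite a
  rw [h0, eq_comm, add_eq_zero_iff_eq_neg] at hsplit
  rw [hsplit, enorm_neg, eLpNorm_one_eq_lintegral_enorm, lintegral_count]
  refine enorm_tsum_le_tsum_enorm.trans_eq (tsum_congr fun j => ?_)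
  rw [Function.update_apply]

lemma eLpNorm_count_le_LpAddConst_mul_update [Countable α] (M : α → E) (a : α) {p : ℝ≥0∞}
    (hp : p ≠ 0) :
    eLpNorm M p count ≤ p.LpAddConst * (eLpNorm (Function.update M a 0) p count + ‖M a‖ₑ) := by
  have hM : M = Function.update M a 0 + ({a} : Set α).indicator fun _ => M a := by
    ext j
    rcases eq_or_ne j a with rfl | hj <;> simp [*]
  have hsingle : eLpNorm (({a} : Set α).indicator fun _ => M a) p count = ‖M a‖ₑ := by
    rw [eLpNorm_indicator_const' (measurableSet_singleton a) (by simp) hp, count_singleton,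
      ENNReal.one_rpow, mul_one]
  conv_lhs => rw [hM]
  rw [← hsingle]
  exact eLpNorm_add_le' .of_discrete .of_discrete p

end CountingMeasure

lemma znorm_nonneg {n : ℕ} (j : Fin n → ℤ) : 0 ≤ znorm j := Real.sqrt_nonneg _

lemma znorm_eq_zero {n : ℕ} {j : Fin n → ℤ} : znorm j = 0 ↔ j = 0 := by
  rw [znorm, Real.sqrt_eq_zero (Finset.sum_nonneg fun i _ => sq_nonneg _),
    Finset.sum_eq_zero_iff_of_nonneg fun i _ => sq_nonneg _, funext_iff]
  simp

lemma summable_znorm_rpow_neg {n : ℕ} {s : ℝ} (hs : (n : ℝ) < s) :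
    Summable fun j : Fin n → ℤ => znorm j ^ (-s) := by
  -- `ℤⁿ` is the lattice spanned by the standard basis of `EuclideanSpace ℝ (Fin n)`, whose norm
  -- restricts to `znorm`.
  let b := (EuclideanSpace.basisFun (Fin n) ℝ).toBasis
  let e := (b.restrictScalars ℤ).equivFun
  have hL : Module.finrank ℤ (Submodule.span ℤ (Set.range b)) = n := by
    rw [ZLattice.rank ℝ, finrank_euclideanSpace_fin]
  have hsum := ZLattice.summable_norm_rpow _ (-s) (by rw [hL]; exact neg_lt_neg hs)
  rw [← e.symm.toEquiv.summable_iff] at hsum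
  refine hsum.congr fun j => ?_
  have hcoord (i : Fin n) : (e.symm j : EuclideanSpace ℝ (Fin n)) i = j i := by
    have := b.restrictScalars_repr_apply ℤ (e.symm j) i
    rw [← Module.Basis.equivFun_apply, LinearEquiv.apply_symm_apply] at this
    simpa [b] using this.symm
  rw [Function.comp_apply, LinearEquiv.coe_toEquiv, Submodule.coe_norm, EuclideanSpace.norm_eq]
  simp only [hcoord, Real.norm_eq_abs, sq_abs, znorm]

lemma ellNormF_eq_eLpNorm {n : ℕ} {s : ℝ} (hs : 0 < s) (b : (Fin n → ℤ) → ℝ) :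
    ellNormF s b = eLpNorm b (ENNReal.ofReal s) count := by
  rw [eLpNorm_eq_eLpNorm' (by simpa using hs) ENNReal.ofReal_ne_top, eLpNorm', lintegral_count,
    ENNReal.toReal_ofReal hs.le, ellNormF]
  simp only [enorm_eq_nnnorm]

lemma ellNorm_eq_eLpNorm {n : ℕ} {s : ℝ≥0∞} (hs : s ≠ 0) (b : (Fin n → ℤ) → ℝ) :
    ellNorm s b = eLpNorm b s count := by
  rw [ellNorm]
  split_ifs with htop
  · simp [htop, enorm_eq_nnnorm]
  · rw [ellNormF_eq_eLpNorm (ENNReal.toReal_pos hs htop), ENNReal.ofReal_toReal htop]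

lemma eLpNorm_znorm_rpow_neg_lt_top {n : ℕ} {s : ℝ} {q : ℝ≥0∞} (h : (n : ℝ) < s * q.toReal) :
    eLpNorm (fun j : Fin n → ℤ => znorm j ^ (-s)) q count < ∞ := by
  have hpos : 0 < s * q.toReal := (Nat.cast_nonneg n).trans_lt h
  have hq : 0 < q.toReal := ENNReal.toReal_nonneg.lt_of_ne fun h0 => by simp [← h0] at hpos
  rw [eLpNorm_lt_top_iff_lintegral_rpow_enorm_lt_top (ENNReal.toReal_pos_iff.1 hq).1.ne'
    (ENNReal.toReal_pos_iff.1 hq).2.ne, lintegral_count]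
  have hterm (j : Fin n → ℤ) :
      ‖znorm j ^ (-s)‖ₑ ^ q.toReal = ENNReal.ofReal (znorm j ^ (-(s * q.toReal))) := by
    rw [Real.enorm_eq_ofReal (Real.rpow_nonneg (znorm_nonneg j) _),
      ENNReal.ofReal_rpow_of_nonneg (Real.rpow_nonneg (znorm_nonneg j) _) hq.le,
      ← Real.rpow_mul (znorm_nonneg j), neg_mul]
  simp_rw [hterm, ← ENNReal.ofReal_tsum_of_nonneg (fun j => Real.rpow_nonneg (znorm_nonneg j) _)
    (summable_znorm_rpow_neg h)]
  exact ENNReal.ofReal_lt_top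

lemma znorm_rpow_neg_mul_rpow_mul {n : ℕ} {s : ℝ} (hs : s ≠ 0) (M : (Fin n → ℤ) → ℝ)
    (j : Fin n → ℤ) : znorm j ^ (-s) * (znorm j ^ s * M j) = Function.update M 0 0 j := by
  rcases eq_or_ne j 0 with rfl | hj
  · simp [znorm, Real.zero_rpow (neg_ne_zero.2 hs)]
  · have hpos : 0 < znorm j := (znorm_nonneg j).lt_of_ne' (znorm_eq_zero.not.2 hj)
    rw [← mul_assoc, ← Real.rpow_add hpos, neg_add_cancel, Real.rpow_zero, one_mul,
      Function.update_of_ne hj]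

lemma exists_eLpNorm_znorm_rpow_neg_mul_le {n : ℕ} (hn : 1 ≤ n) {r : ℝ} {t p₀ : ℝ≥0∞}
    (ht : t ≤ p₀) (hpos : p₀.toReal⁻¹ < t.toReal⁻¹) (hr : t.toReal⁻¹ - p₀.toReal⁻¹ < r) :
    ∃ C ≠ ∞, ∀ W : (Fin n → ℤ) → ℝ,
      eLpNorm (fun j => znorm j ^ (-((n : ℝ) * r)) * W j) t count ≤ C * eLpNorm W p₀ count := by
  have hholder := ENNReal.holderTriple_inv_tsub_inv ht
  set q := (t⁻¹ - p₀⁻¹)⁻¹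
  have ht0 : t ≠ 0 := by
    rintro rfl
    simp only [ENNReal.toReal_zero, inv_zero, inv_neg''] at hpos
    exact hpos.not_ge ENNReal.toReal_nonneg
  have hq : q.toReal⁻¹ = t.toReal⁻¹ - p₀.toReal⁻¹ := hholder.toReal_inv_eq_sub _ _ _ ht0
  have hq0 : 0 < q.toReal := inv_pos.1 (hq ▸ sub_pos.2 hpos)
  have hrq : 1 < r * q.toReal := (inv_lt_iff_one_lt_mul₀ hq0).1 (hq ▸ hr)
  refine ⟨_, (eLpNorm_znorm_rpow_neg_lt_top (n := n) (s := n * r) (q := q) ?_).ne, fun W => ?_⟩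
  · rw [mul_assoc]
    exact lt_mul_of_one_lt_right (by exact_mod_cast hn) hrq
  · simpa using eLpNorm_le_eLpNorm_mul_eLpNorm'_of_norm (p := q) (q := p₀) (r := t)
      .of_discrete .of_discrete (· * ·) 1 (.of_forall fun j => by simp [norm_mul])

/-- If `‖|·|^{nr} M‖_{ℓ^{p₀}} < ∞` and `∑_j M(j) = 0` (absolutely
convergent), then `‖M‖_{ℓ^p} ≤ C ‖|·|^{nr} M‖_{ℓ^{p₀}}` with `C = C(n,p,p₀,r)`. -/
theorem ellp_le_weighted_norm (n : ℕ) (hn : 1 ≤ n) (p : ℝ) (p₀ : ℝ≥0∞) (hp0 : 0 < p)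
    (hp1 : p ≤ 1) (hp₀ : 1 < p₀) (r : ℝ) (hr : 1/p - 1/p₀.toReal < r) :
    ∃ C : ℝ≥0, 0 < C ∧
      ∀ M : (Fin n → ℤ) → ℝ,
        ellNorm p₀ (fun j => znorm j ^ ((n : ℝ)*r) * M j) ≠ ∞ →
        Summable (fun j : Fin n → ℤ => |M j|) →
        (∑' j : Fin n → ℤ, M j) = 0 →
        ellNormF p M ≤ (C : ℝ≥0∞) * ellNorm p₀ (fun j => znorm j ^ ((n : ℝ)*r) * M j) := by
  rw [one_div, one_div] at hr
  have hp_inv : 1 ≤ p⁻¹ := (one_le_inv₀ hp0).2 hp1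
  have hp₀_inv := ENNReal.toReal_inv_lt_one hp₀
  obtain ⟨C, hC, hHolder⟩ := exists_eLpNorm_znorm_rpow_neg_mul_le hn
    ((ENNReal.ofReal_le_one.2 hp1).trans hp₀.le) (by rw [ENNReal.toReal_ofReal hp0.le]; linarith)
    (by rwa [ENNReal.toReal_ofReal hp0.le])
  obtain ⟨C₁, hC₁, hHolder₁⟩ := exists_eLpNorm_znorm_rpow_neg_mul_le hn hp₀.le (by simpa)
    (by rw [ENNReal.toReal_one, inv_one]; exact (sub_le_sub_right hp_inv _).trans_lt hr)
  obtain ⟨K, hK, hCK⟩ := ENNReal.exists_pos_nnreal_ge <| ENNReal.mul_ne_top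
    (ENNReal.LpAddConst_lt_top (ENNReal.ofReal p)).ne (ENNReal.add_ne_top.2 ⟨hC, hC₁⟩)
  refine ⟨K, hK, fun M _ hsum hzero => ?_⟩
  set W := fun j => znorm j ^ ((n : ℝ) * r) * M j
  have hMW : Function.update M 0 0 = fun j => znorm j ^ (-((n : ℝ) * r)) * W j := funext fun j =>
    (znorm_rpow_neg_mul_rpow_mul (mul_pos (by exact_mod_cast hn) (by linarith)).ne' M j).symm
  rw [ellNormF_eq_eLpNorm hp0, ellNorm_eq_eLpNorm (by positivity)]
  calc eLpNorm M (ENNReal.ofReal p) count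
      ≤ (ENNReal.ofReal p).LpAddConst *
          (eLpNorm (Function.update M 0 0) (ENNReal.ofReal p) count + ‖M 0‖ₑ) :=
        eLpNorm_count_le_LpAddConst_mul_update M 0 (by simpa using hp0)
    _ ≤ (ENNReal.ofReal p).LpAddConst * (C * eLpNorm W p₀ count + C₁ * eLpNorm W p₀ count) := by
        gcongr
        · exact hMW ▸ hHolder W
        · exact (enorm_le_eLpNorm_one_update_of_tsum_eq_zero (summable_abs_iff.1 hsum) hzero
            0).trans (hMW ▸ hHolder₁ W)
    _ = (ENNReal.ofReal p).LpAddConst * (C + C₁) * eLpNorm W p₀ count := by ring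
    _ ≤ K * eLpNorm W p₀ count := by gcongr
end
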